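/- Let α, β, γ, μ, ν be an admissible solution of System B on [0,∞) with β ≡ γ. Then there exists δ > 0 such that α(t) ≥ δ for all t ≥ 0. -/

import Mathlib

/-! With `β = γ`, the equation for `α` gives `α' ≥ 0` wherever `α ≤ 4β` (as `16β² ≥ α²`), and
the equation for `β` gives `β' ≥ 0` wherever `4β ≤ α` (as `16τ < 16β² ≤ α²`). Hence
`min (α, 4β)` never decreases: off the crossing set it is locally one of the two functions, and at
a crossing its right slope is the smaller of two nonnegative slopes. So
`α t ≥ min (α t, 4β t) ≥ min (α 0, 4β 0) > 0`. -/

/-- **System B**: the homogeneous Ricci flow equations on `SL(2,ℂ)/U(1)` for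
real-valued differentiable functions `α β γ μ ν` on a set `s`, with `τ := μ² + ν²`,
together with the admissibility conditions `α > 0`, `β > 0`, `γ > 0`, `βγ > τ`. -/
def IsAdmissibleSolutionB (α β γ μ ν : ℝ → ℝ) (s : Set ℝ) : Prop :=
  ∀ t ∈ s,
    0 < α t ∧ 0 < β t ∧ 0 < γ t ∧
    μ t ^ 2 + ν t ^ 2 < β t * γ t ∧
    HasDerivWithinAt α
      (2 * (16 * β t * γ t - α t ^ 2) / (β t * γ t - (μ t ^ 2 + ν t ^ 2))) s t ∧
    HasDerivWithinAt β
      (-(β t * (16 * (μ t ^ 2 + ν t ^ 2) - α t ^ 2)) /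
        (α t * (β t * γ t - (μ t ^ 2 + ν t ^ 2)))) s t ∧
    HasDerivWithinAt γ
      (-(γ t * (16 * (μ t ^ 2 + ν t ^ 2) - α t ^ 2)) /
        (α t * (β t * γ t - (μ t ^ 2 + ν t ^ 2)))) s t ∧
    HasDerivWithinAt μ
      (8 - μ t * (16 * β t * γ t - α t ^ 2) /
        (α t * (β t * γ t - (μ t ^ 2 + ν t ^ 2)))) s t ∧
    HasDerivWithinAt ν
      (-(ν t * (16 * β t * γ t - α t ^ 2)) /
        (α t * (β t * γ t - (μ t ^ 2 + ν t ^ 2)))) s t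

open Set Filter Topology

theorem HasDerivWithinAt.min_of_lt {f g : ℝ → ℝ} {f' x : ℝ} {s : Set ℝ}
    (hf : HasDerivWithinAt f f' s x) (hg : ContinuousWithinAt g s x) (hlt : f x < g x) :
    HasDerivWithinAt (fun y => min (f y) (g y)) f' s x :=
  hf.congr_of_eventuallyEq
    ((hf.continuousWithinAt.eventually_lt hg hlt).mono fun _ hy => min_eq_left hy.le)
    (min_eq_left hlt.le)

theorem HasDerivWithinAt.eventually_lt_slope {f : ℝ → ℝ} {f' x r : ℝ}
    (hf : HasDerivWithinAt f f' (Ici x) x) (hr : r < f') :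
    ∀ᶠ z in 𝓝[>] x, r < slope f x z :=
  ((hasDerivWithinAt_iff_tendsto_slope' (lt_irrefl x)).1
    (hasDerivWithinAt_Ioi_iff_Ici.2 hf)).eventually_const_lt hr

theorem eventually_lt_slope_min {f g : ℝ → ℝ} {f' g' x r : ℝ}
    (hf : HasDerivWithinAt f f' (Ici x) x) (hg : HasDerivWithinAt g g' (Ici x) x)
    (hf' : f x ≤ g x → 0 ≤ f') (hg' : g x ≤ f x → 0 ≤ g') (hr : r < 0) :
    ∀ᶠ z in 𝓝[>] x, r < slope (fun y => min (f y) (g y)) x z := by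
  rcases lt_trichotomy (f x) (g x) with hlt | heq | hgt
  · exact (hf.min_of_lt hg.continuousWithinAt hlt).eventually_lt_slope
      (hr.trans_le (hf' hlt.le))
  · filter_upwards [hf.eventually_lt_slope (hr.trans_le (hf' heq.le)),
      hg.eventually_lt_slope (hr.trans_le (hg' heq.ge)), self_mem_nhdsWithin]
      with z hfz hgz (hz : x < z)
    rw [slope_def_field, lt_div_iff₀ (sub_pos.2 hz)] at hfz hgz ⊢
    rw [← heq, min_self, lt_sub_iff_add_lt, lt_min_iff]
    constructor <;> linarith
  · simp_rw [min_comm (f _)]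
    exact (hg.min_of_lt hf.continuousWithinAt hgt).eventually_lt_slope
      (hr.trans_le (hg' hgt.le))

theorem monotoneOn_min_of_hasDerivWithinAt {f g f' g' : ℝ → ℝ} {a b : ℝ}
    (hfc : ContinuousOn f (Icc a b)) (hgc : ContinuousOn g (Icc a b))
    (hf : ∀ x ∈ Ico a b, HasDerivWithinAt f (f' x) (Ici x) x)
    (hg : ∀ x ∈ Ico a b, HasDerivWithinAt g (g' x) (Ici x) x)
    (hf' : ∀ x ∈ Ico a b, f x ≤ g x → 0 ≤ f' x) (hg' : ∀ x ∈ Ico a b, g x ≤ f x → 0 ≤ g' x) :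
    MonotoneOn (fun x => min (f x) (g x)) (Icc a b) := by
  intro x hx y hy hxy
  have hsub : Icc x y ⊆ Icc a b := Icc_subset_Icc hx.1 hy.2
  have hsub' : Ico x y ⊆ Ico a b := Ico_subset_Ico hx.1 hy.2
  have key := image_le_of_liminf_slope_right_le_deriv_boundary (a := x) (b := y)
    (f := fun z => -min (f z) (g z)) (B := fun _ => -min (f x) (g x)) (B' := 0)
    ((hfc.inf hgc).neg.mono hsub) le_rfl continuousOn_const
    (fun _ _ => hasDerivWithinAt_const _ _ _) (fun z hz r hr => ?_) ⟨hxy, le_rfl⟩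
  · simpa using key
  have hz := hsub' hz
  refine (eventually_lt_slope_min (hf z hz) (hg z hz) (hf' z hz) (hg' z hz)
    (neg_lt_zero.2 hr)).frequently.mono fun w hw => ?_
  rw [slope_neg]
  exact neg_lt.1 hw

theorem systemB_alpha_rhs_nonneg {a b c m n : ℝ} (ha : 0 < a)
    (hτ : m ^ 2 + n ^ 2 < b * c) (hbc : b = c) (hab : a ≤ 4 * b) :
    0 ≤ 2 * (16 * b * c - a ^ 2) / (b * c - (m ^ 2 + n ^ 2)) := by
  subst hbc
  apply div_nonneg <;> nlinarith

theorem systemB_beta_rhs_nonneg {a b c m n : ℝ} (ha : 0 < a) (hb : 0 < b)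
    (hτ : m ^ 2 + n ^ 2 < b * c) (hbc : b = c) (hab : 4 * b ≤ a) :
    0 ≤ -(b * (16 * (m ^ 2 + n ^ 2) - a ^ 2)) / (a * (b * c - (m ^ 2 + n ^ 2))) := by
  subst hbc
  have hsq : 16 * (b * b) ≤ a ^ 2 := by nlinarith
  apply div_nonneg
  · nlinarith
  · exact mul_nonneg ha.le (by linarith)

theorem IsAdmissibleSolutionB.monotoneOn_min {α β γ μ ν : ℝ → ℝ}
    (h : IsAdmissibleSolutionB α β γ μ ν (Ici 0)) (hβγ : ∀ t ∈ Ici (0 : ℝ), β t = γ t)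
    (T : ℝ) : MonotoneOn (fun t => min (α t) (4 * β t)) (Icc 0 T) := by
  refine monotoneOn_min_of_hasDerivWithinAt (fun t ht => ?_) (fun t ht => ?_)
    (fun t ht => (h t ht.1).2.2.2.2.1.mono (Ici_subset_Ici.2 ht.1))
    (fun t ht => ((h t ht.1).2.2.2.2.2.1.const_mul 4).mono (Ici_subset_Ici.2 ht.1))
    (fun t ht hle => ?_) (fun t ht hle => ?_)
  all_goals obtain ⟨hα, hβ, -, hτ, hα', hβ', -⟩ := h t ht.1
  · exact hα'.continuousWithinAt.mono Icc_subset_Ici_self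
  · exact (hβ'.continuousWithinAt.const_mul 4).mono Icc_subset_Ici_self
  · exact systemB_alpha_rhs_nonneg hα hτ (hβγ t ht.1) hle
  · exact mul_nonneg (by norm_num) (systemB_beta_rhs_nonneg hα hβ hτ (hβγ t ht.1) hle)

/-- For an admissible solution of System B on `[0,∞)` with `β ≡ γ`, the function `α`
is bounded below by a positive constant. -/
theorem systemB_alpha_bounded_below (α β γ μ ν : ℝ → ℝ)
    (h : IsAdmissibleSolutionB α β γ μ ν (Set.Ici 0))
    (hβγ : ∀ t ∈ Set.Ici (0 : ℝ), β t = γ t) :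
    ∃ δ : ℝ, 0 < δ ∧ ∀ t ∈ Set.Ici (0 : ℝ), δ ≤ α t := by
  obtain ⟨hα₀, hβ₀, -⟩ := h 0 self_mem_Ici
  refine ⟨min (α 0) (4 * β 0), lt_min hα₀ (by positivity), fun t ht => ?_⟩
  calc min (α 0) (4 * β 0)
      ≤ min (α t) (4 * β t) :=
        h.monotoneOn_min hβγ t ⟨le_rfl, ht⟩ ⟨ht, le_rfl⟩ ht
    _ ≤ α t := min_le_left _ _
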